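/- Let n ≥ 2 and 1 < p < n with p* = np/(n-p). Fix v = v_{1,1,0}(x) = (1 + |x|^{p/(p-1)})^{-(n-p)/p}, a nontrivial φ ∈ C_c^∞(B(0,1)), and a sequence x_i → ∞ in ℝⁿ. Then for the functions ũ_i := v + φ(x_i + ·), one has ∫|Dũ_i|^p dx = ∫|Dv|^p dx + ∫|Dφ|^p dx + r_{i,1} and ∫|ũ_i|^{p*} dx = ∫v^{p*} dx + ∫|φ|^{p*} dx + r_{i,2}, where |r_{i,1}| + |r_{i,2}| ≤ C(v(x_i) + |Dv(x_i)|) → 0 as i → ∞, for some constant C depending on n, p, φ. -/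

import Mathlib

open MeasureTheory Metric Real

private lemma rpow_tangent {x y q : ℝ} (hy : 0 ≤ y) (hxy : y ≤ x) (hq : 1 ≤ q) :
    x ^ q - y ^ q ≤ q * x ^ (q - 1) * (x - y) := by
  rcases eq_or_lt_of_le (hy.trans hxy) with h | hx
  · rw [← h]
    have hy0 : y = 0 := le_antisymm (h ▸ hxy) hy
    simp [hy0, Real.zero_rpow (by linarith : q ≠ 0)]
  · have hb := one_add_mul_self_le_rpow_one_add (s := y / x - 1) (by
      have : 0 ≤ y / x := div_nonneg hy hx.le
      linarith) hq
    rw [add_sub_cancel] at hb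
    have hdiv : (y / x) ^ q = y ^ q / x ^ q := Real.div_rpow hy hx.le q
    rw [hdiv] at hb
    have hxq : (0:ℝ) < x ^ q := Real.rpow_pos_of_pos hx q
    have h2 : x ^ q * (1 + q * (y / x - 1)) ≤ y ^ q := by
      rw [mul_comm]
      exact (mul_le_mul_of_nonneg_right hb hxq.le) |>.trans_eq (div_mul_cancel₀ _ hxq.ne')
    have hxq1 : x ^ (q - 1) = x ^ q / x := by
      rw [Real.rpow_sub hx, Real.rpow_one]
    rw [hxq1]
    have hx0 : x ≠ 0 := hx.ne'
    have expand : x ^ q * (1 + q * (y / x - 1)) = x ^ q - q * (x ^ q / x) * (x - y) := by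
      field_simp
      ring
    rw [expand] at h2
    linarith

private lemma abs_rpow_sub_rpow {x y q : ℝ} (hx : 0 ≤ x) (hy : 0 ≤ y) (hq : 1 ≤ q) :
    |x ^ q - y ^ q| ≤ q * (x + y) ^ (q - 1) * |x - y| := by
  have key : ∀ a b : ℝ, 0 ≤ a → 0 ≤ b → b ≤ a →
      |a ^ q - b ^ q| ≤ q * (a + b) ^ (q - 1) * |a - b| := by
    intro a b ha hb hba
    have h1 : b ^ q ≤ a ^ q := Real.rpow_le_rpow hb hba (by linarith)
    rw [abs_of_nonneg (by linarith), abs_of_nonneg (by linarith)]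
    have h2 := rpow_tangent hb hba hq
    have h3 : a ^ (q - 1) ≤ (a + b) ^ (q - 1) :=
      Real.rpow_le_rpow ha (by linarith) (by linarith)
    have hq0 : (0:ℝ) < q := by linarith
    have hab : (0:ℝ) ≤ a - b := by linarith
    have h4 := mul_le_mul_of_nonneg_right (mul_le_mul_of_nonneg_left h3 hq0.le) hab
    nlinarith
  rcases le_total y x with h | h
  · exact key x y hx hy h
  · have := key y x hy hx h
    rw [abs_sub_comm (y ^ q), abs_sub_comm y, add_comm y] at this
    exact this

private lemma add_rpow_le {a b c : ℝ} (ha : 0 ≤ a) (hb : 0 ≤ b) (hc : 0 ≤ c) :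
    (a + b) ^ c ≤ 2 ^ c * (a ^ c + b ^ c) := by
  rcases le_total a b with h | h
  · have h1 : (a + b) ^ c ≤ (2 * b) ^ c :=
      Real.rpow_le_rpow (by linarith) (by linarith) hc
    rw [Real.mul_rpow (by norm_num) hb] at h1
    nlinarith [Real.rpow_nonneg ha c, Real.rpow_nonneg (by norm_num : (0:ℝ) ≤ 2) c]
  · have h1 : (a + b) ^ c ≤ (2 * a) ^ c :=
      Real.rpow_le_rpow (by linarith) (by linarith) hc
    rw [Real.mul_rpow (by norm_num) ha] at h1
    nlinarith [Real.rpow_nonneg hb c, Real.rpow_nonneg (by norm_num : (0:ℝ) ≤ 2) c]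

private lemma one_add_rpow_lb {r t : ℝ} (hr : 0 ≤ r) (ht : 0 ≤ t) :
    2 ^ (-t) * (1 + r) ^ t ≤ 1 + r ^ t := by
  have h := add_rpow_le (zero_le_one) hr ht
  rw [Real.one_rpow] at h
  have h2 : (0:ℝ) < 2 ^ t := Real.rpow_pos_of_pos (by norm_num) t
  rw [Real.rpow_neg (by norm_num)]
  rw [inv_mul_le_iff₀ h2]
  nlinarith [Real.rpow_nonneg hr t]

private lemma rpow_sub_one_le {r t : ℝ} (hr : 0 ≤ r) (ht : 1 ≤ t) :
    r ^ (t - 1) ≤ 1 + r ^ t := by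
  rcases le_total r 1 with h | h
  · have : r ^ (t - 1) ≤ 1 := Real.rpow_le_one hr h (by linarith)
    nlinarith [Real.rpow_nonneg hr t]
  · have : r ^ (t - 1) ≤ r ^ t := Real.rpow_le_rpow_of_exponent_le h (by linarith)
    linarith

private lemma comp_bound {t s a b : ℝ} (ht : 0 ≤ t) (hs : 0 ≤ s) (ha : 0 ≤ a) (hb : 0 ≤ b)
    (hab : a ≤ b + 1) :
    (1 + b ^ t) ^ (-s) ≤ (1 + 2 ^ t) ^ s * (1 + a ^ t) ^ (-s) := by
  have h1 : a ^ t ≤ (b + 1) ^ t := Real.rpow_le_rpow ha hab ht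
  have h2 : (b + 1) ^ t ≤ 2 ^ t * (b ^ t + 1 ^ t) := add_rpow_le hb zero_le_one ht
  rw [Real.one_rpow] at h2
  have hA : (0:ℝ) < 1 + a ^ t := by positivity
  have hB : (0:ℝ) < 1 + b ^ t := by positivity
  have h2t : (0:ℝ) < 2 ^ t := Real.rpow_pos_of_pos two_pos t
  have key : 1 + a ^ t ≤ (1 + 2 ^ t) * (1 + b ^ t) := by nlinarith [Real.rpow_nonneg hb t]
  have h3 : ((1 + 2 ^ t) * (1 + b ^ t)) ^ (-s) ≤ (1 + a ^ t) ^ (-s) :=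
    Real.rpow_le_rpow_of_nonpos hA key (neg_nonpos.2 hs)
  rw [Real.mul_rpow (by positivity) hB.le] at h3
  have h4 : (0:ℝ) < (1 + 2 ^ t) ^ s := Real.rpow_pos_of_pos (by positivity) s
  have h5 : (1 + 2 ^ t : ℝ) ^ (-s) = ((1 + 2 ^ t) ^ s)⁻¹ := by
    rw [Real.rpow_neg (by positivity)]
  rw [h5] at h3
  calc (1 + b ^ t) ^ (-s)
      = (1 + 2 ^ t) ^ s * (((1 + 2 ^ t) ^ s)⁻¹ * (1 + b ^ t) ^ (-s)) := by
        field_simp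
    _ ≤ (1 + 2 ^ t) ^ s * (1 + a ^ t) ^ (-s) := mul_le_mul_of_nonneg_left h3 h4.le

private lemma vderiv {E : Type*} [NormedAddCommGroup E] [InnerProductSpace ℝ E]
    {t s : ℝ} (ht : 1 < t) (hs : 0 < s) {y : E} (hy : y ≠ 0) :
    HasFDerivAt (fun x : E => (1 + ‖x‖ ^ t) ^ (-s))
      (((-s * (1 + ‖y‖ ^ t) ^ (-s - 1)) * (t * ‖y‖ ^ (t - 1))) •
        (fderiv ℝ (fun x : E => ‖x‖) y)) y := by
  have hr : 0 < ‖y‖ := norm_pos_iff.2 hy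
  have hW : (0:ℝ) < 1 + ‖y‖ ^ t := by positivity
  have hN : DifferentiableAt ℝ (fun x : E => ‖x‖) y := differentiableAt_id.norm ℝ hy
  have h1 : HasDerivAt (fun a : ℝ => a ^ t) (t * ‖y‖ ^ (t - 1)) ‖y‖ :=
    Real.hasDerivAt_rpow_const (Or.inl hr.ne')
  have h2 : HasDerivAt (fun a : ℝ => 1 + a ^ t) (t * ‖y‖ ^ (t - 1)) ‖y‖ := h1.const_add 1
  have h3 : HasDerivAt (fun X : ℝ => X ^ (-s)) (-s * (1 + ‖y‖ ^ t) ^ (-s - 1)) (1 + ‖y‖ ^ t) :=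
    Real.hasDerivAt_rpow_const (Or.inl hW.ne')
  have hw := (h3.comp ‖y‖ h2).comp_hasFDerivAt y hN.hasFDerivAt
  exact hw

private lemma vderiv_norm_le {E : Type*} [NormedAddCommGroup E] [InnerProductSpace ℝ E]
    {t s : ℝ} (ht : 1 < t) (hs : 0 < s) {y : E} (hy : y ≠ 0) :
    ‖fderiv ℝ (fun x : E => (1 + ‖x‖ ^ t) ^ (-s)) y‖
      ≤ s * t * ((1 + ‖y‖ ^ t) ^ (-s - 1) * ‖y‖ ^ (t - 1)) := by
  have hr : 0 < ‖y‖ := norm_pos_iff.2 hy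
  have hW : (0:ℝ) < 1 + ‖y‖ ^ t := by positivity
  rw [(vderiv ht hs hy).fderiv, norm_smul]
  have hDN : ‖fderiv ℝ (fun x : E => ‖x‖) y‖ ≤ 1 := by
    simpa using norm_fderiv_le_of_lipschitz ℝ (x₀ := y) lipschitzWith_one_norm
  have e1 : (0:ℝ) < (1 + ‖y‖ ^ t) ^ (-s - 1) := Real.rpow_pos_of_pos hW _
  have e2 : (0:ℝ) < ‖y‖ ^ (t - 1) := Real.rpow_pos_of_pos hr _
  have habs : ‖(-s * (1 + ‖y‖ ^ t) ^ (-s - 1)) * (t * ‖y‖ ^ (t - 1))‖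
      = s * t * ((1 + ‖y‖ ^ t) ^ (-s - 1) * ‖y‖ ^ (t - 1)) := by
    rw [Real.norm_eq_abs, abs_of_nonpos (mul_nonpos_of_nonpos_of_nonneg (by nlinarith) (by positivity))]
    ring
  rw [habs]
  have hpos : (0:ℝ) ≤ s * t * ((1 + ‖y‖ ^ t) ^ (-s - 1) * ‖y‖ ^ (t - 1)) := by positivity
  nlinarith [mul_le_mul_of_nonneg_left hDN hpos]

open MeasureTheory Filter Metric

set_option maxHeartbeats 8000000 in
theorem stmt_18 (n : ℕ) (hn : 2 ≤ n) (p : ℝ) (hp1 : 1 < p) (hpn : p < n)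
    (q : ℝ) (hq : q = n * p / (n - p))
    (v : EuclideanSpace ℝ (Fin n) → ℝ)
    (hv : ∀ x, v x = (1 + ‖x‖ ^ (p / (p - 1))) ^ (-(((n : ℝ) - p) / p)))
    (φ : EuclideanSpace ℝ (Fin n) → ℝ) (hφsm : ContDiff ℝ (⊤ : ℕ∞) φ)
    (hφsupp : tsupport φ ⊆ Metric.ball (0 : EuclideanSpace ℝ (Fin n)) 1)
    (hφne : φ ≠ 0)
    (x : ℕ → EuclideanSpace ℝ (Fin n))
    (hx : Tendsto (fun i => ‖x i‖) atTop atTop)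
    (u : ℕ → EuclideanSpace ℝ (Fin n) → ℝ)
    (hu : ∀ i y, u i y = v y + φ (x i + y)) :
    ∃ C : ℝ, 0 < C ∧
      (∀ i,
        |(∫ y, ‖fderiv ℝ (u i) y‖ ^ p)
            - (∫ y, ‖fderiv ℝ v y‖ ^ p) - ∫ y, ‖fderiv ℝ φ y‖ ^ p|
        + |(∫ y, |u i y| ^ q) - (∫ y, v y ^ q) - ∫ y, |φ y| ^ q|
          ≤ C * (v (x i) + ‖fderiv ℝ v (x i)‖)) ∧
      Tendsto (fun i => v (x i) + ‖fderiv ℝ v (x i)‖) atTop (nhds 0) := by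
  classical
  have hn' : (2:ℝ) ≤ (n:ℝ) := by exact_mod_cast hn
  have hp0 : (0:ℝ) < p := by linarith
  have hp1' : (0:ℝ) < p - 1 := by linarith
  have hnp : (0:ℝ) < (n:ℝ) - p := by linarith
  set t := p / (p - 1) with htdef
  set s := ((n:ℝ) - p) / p with hsdef
  have ht1 : 1 < t := (one_lt_div hp1').2 (by linarith)
  have ht0 : 0 < t := by linarith
  have hs : 0 < s := div_pos hnp hp0
  have hq1 : 1 < q := by rw [hq, lt_div_iff₀ hnp]; nlinarith
  have hsq : (-s) * q = -(n:ℝ) := by rw [hsdef, hq]; field_simp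
  have hveq : v = fun y : EuclideanSpace ℝ (Fin n) => (1 + ‖y‖ ^ t) ^ (-s) := funext hv
  have hW : ∀ y : EuclideanSpace ℝ (Fin n), (0:ℝ) < 1 + ‖y‖ ^ t := fun y => by positivity
  have hv0 : ∀ y, 0 < v y := fun y => by
    rw [hveq]; exact Real.rpow_pos_of_pos (hW y) _
  have hv1 : ∀ y, v y ≤ 1 := fun y => by
    rw [hveq]
    exact Real.rpow_le_one_of_one_le_of_nonpos
      (by nlinarith [Real.rpow_nonneg (norm_nonneg y) t]) (by linarith)
  have hvcont : Continuous v := by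
    rw [hveq]
    have h1 : Continuous fun y : EuclideanSpace ℝ (Fin n) => 1 + ‖y‖ ^ t :=
      continuous_const.add (continuous_norm.rpow_const (fun y => Or.inr ht0.le))
    exact h1.rpow_const (fun y => Or.inl (hW y).ne')
  have hvdiff : ∀ y : EuclideanSpace ℝ (Fin n), y ≠ 0 → DifferentiableAt ℝ v y := by
    intro y hy; rw [hveq]; exact (vderiv ht1 hs hy).differentiableAt
  have hDvle : ∀ y : EuclideanSpace ℝ (Fin n), y ≠ 0 →
      ‖fderiv ℝ v y‖ ≤ s * t * ((1 + ‖y‖ ^ t) ^ (-s - 1) * ‖y‖ ^ (t - 1)) := by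
    intro y hy; rw [hveq]; exact vderiv_norm_le ht1 hs hy
  have hB1 : ∀ y : EuclideanSpace ℝ (Fin n), y ≠ 0 → ‖fderiv ℝ v y‖ ≤ s * t * v y := by
    intro y hy
    refine (hDvle y hy).trans ?_
    have h1 : ‖y‖ ^ (t - 1) ≤ 1 + ‖y‖ ^ t := rpow_sub_one_le (norm_nonneg y) ht1.le
    have h2 : (1 + ‖y‖ ^ t) ^ (-s - 1) * ‖y‖ ^ (t - 1)
        ≤ (1 + ‖y‖ ^ t) ^ (-s - 1) * (1 + ‖y‖ ^ t) :=
      mul_le_mul_of_nonneg_left h1 (Real.rpow_nonneg (hW y).le _)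
    have h3 : (1 + ‖y‖ ^ t) ^ (-s - 1) * (1 + ‖y‖ ^ t) = (1 + ‖y‖ ^ t) ^ (-s) := by
      rw [← Real.rpow_add_one (hW y).ne' (-s - 1)]; norm_num
    have h4 : v y = (1 + ‖y‖ ^ t) ^ (-s) := hv y
    rw [h4]
    nlinarith [mul_le_mul_of_nonneg_left (h2.trans_eq h3) (by positivity : (0:ℝ) ≤ s * t)]
  have hnR1 : (n:ℝ) < t * ((n:ℝ) - 1) := by
    rw [htdef, div_mul_eq_mul_div, lt_div_iff₀ hp1']; nlinarith
  have hnR2 : (n:ℝ) < t * (n:ℝ) := by nlinarith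
  -- decay bound for ‖fderiv v‖ ^ p
  have hB2 : ∀ y : EuclideanSpace ℝ (Fin n), y ≠ 0 →
      ‖fderiv ℝ v y‖ ^ p ≤ (s * t) ^ p * 2 ^ (t * ((n:ℝ) - 1)) *
        (1 + ‖y‖) ^ (-(t * ((n:ℝ) - 1))) := by
    intro y hy
    have hr : 0 < ‖y‖ := norm_pos_iff.2 hy
    have hWy := hW y
    have ha : ‖y‖ ^ (t - 1) ≤ (1 + ‖y‖ ^ t) ^ ((t - 1) / t) := by
      have e1 : ‖y‖ ^ (t - 1) = (‖y‖ ^ t) ^ ((t - 1) / t) := by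
        rw [← Real.rpow_mul (norm_nonneg y)]
        congr 1
        field_simp
      rw [e1]
      exact Real.rpow_le_rpow (Real.rpow_nonneg (norm_nonneg y) t) (by linarith)
        (div_nonneg (by linarith) ht0.le)
    have hb : ‖fderiv ℝ v y‖ ≤ s * t * (1 + ‖y‖ ^ t) ^ (-s - 1 + (t - 1) / t) := by
      refine (hDvle y hy).trans ?_
      have h2 : (1 + ‖y‖ ^ t) ^ (-s - 1) * ‖y‖ ^ (t - 1)
          ≤ (1 + ‖y‖ ^ t) ^ (-s - 1) * (1 + ‖y‖ ^ t) ^ ((t - 1) / t) :=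
        mul_le_mul_of_nonneg_left ha (Real.rpow_nonneg hWy.le _)
      have h3 : (1 + ‖y‖ ^ t) ^ (-s - 1) * (1 + ‖y‖ ^ t) ^ ((t - 1) / t)
          = (1 + ‖y‖ ^ t) ^ (-s - 1 + (t - 1) / t) := (Real.rpow_add hWy _ _).symm
      nlinarith [mul_le_mul_of_nonneg_left (h2.trans_eq h3) (by positivity : (0:ℝ) ≤ s * t)]
    have hc : ‖fderiv ℝ v y‖ ^ p ≤ (s * t) ^ p * (1 + ‖y‖ ^ t) ^ (-((n:ℝ) - 1)) := by
      have h1 : ‖fderiv ℝ v y‖ ^ p ≤ (s * t * (1 + ‖y‖ ^ t) ^ (-s - 1 + (t - 1) / t)) ^ p :=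
        Real.rpow_le_rpow (norm_nonneg _) hb hp0.le
      have h2 : (s * t * (1 + ‖y‖ ^ t) ^ (-s - 1 + (t - 1) / t)) ^ p
          = (s * t) ^ p * ((1 + ‖y‖ ^ t) ^ (-s - 1 + (t - 1) / t)) ^ p :=
        Real.mul_rpow (by positivity) (Real.rpow_nonneg hWy.le _)
      have h3 : ((1 + ‖y‖ ^ t) ^ (-s - 1 + (t - 1) / t)) ^ p
          = (1 + ‖y‖ ^ t) ^ ((-s - 1 + (t - 1) / t) * p) := (Real.rpow_mul hWy.le _ _).symm
      have h4 : (-s - 1 + (t - 1) / t) * p = -((n:ℝ) - 1) := by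
        rw [hsdef, htdef]; field_simp; ring
      rw [h2, h3, h4] at h1
      exact h1
    have hd : (1 + ‖y‖ ^ t) ^ (-((n:ℝ) - 1))
        ≤ 2 ^ (t * ((n:ℝ) - 1)) * (1 + ‖y‖) ^ (-(t * ((n:ℝ) - 1))) := by
      have hA : (0:ℝ) < 2 ^ (-t) * (1 + ‖y‖) ^ t := by positivity
      have hle : 2 ^ (-t) * (1 + ‖y‖) ^ t ≤ 1 + ‖y‖ ^ t :=
        one_add_rpow_lb (norm_nonneg y) ht0.le
      have h1 : (1 + ‖y‖ ^ t) ^ (-((n:ℝ) - 1)) ≤ (2 ^ (-t) * (1 + ‖y‖) ^ t) ^ (-((n:ℝ) - 1)) :=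
        Real.rpow_le_rpow_of_nonpos hA hle (by linarith)
      have h2 : (2 ^ (-t) * (1 + ‖y‖) ^ t) ^ (-((n:ℝ) - 1))
          = (2 ^ (-t) : ℝ) ^ (-((n:ℝ) - 1)) * ((1 + ‖y‖) ^ t) ^ (-((n:ℝ) - 1)) :=
        Real.mul_rpow (by positivity) (Real.rpow_nonneg (by positivity) _)
      have h3 : ((2:ℝ) ^ (-t)) ^ (-((n:ℝ) - 1)) = 2 ^ (t * ((n:ℝ) - 1)) := by
        rw [← Real.rpow_mul (by norm_num : (0:ℝ) ≤ 2)]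
        congr 1; ring
      have h4 : ((1 + ‖y‖) ^ t) ^ (-((n:ℝ) - 1)) = (1 + ‖y‖) ^ (-(t * ((n:ℝ) - 1))) := by
        rw [← Real.rpow_mul (by positivity : (0:ℝ) ≤ 1 + ‖y‖)]
        ring_nf
      rw [h2, h3, h4] at h1
      exact h1
    calc ‖fderiv ℝ v y‖ ^ p ≤ (s * t) ^ p * (1 + ‖y‖ ^ t) ^ (-((n:ℝ) - 1)) := hc
      _ ≤ (s * t) ^ p * (2 ^ (t * ((n:ℝ) - 1)) * (1 + ‖y‖) ^ (-(t * ((n:ℝ) - 1)))) :=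
          mul_le_mul_of_nonneg_left hd (by positivity)
      _ = (s * t) ^ p * 2 ^ (t * ((n:ℝ) - 1)) * (1 + ‖y‖) ^ (-(t * ((n:ℝ) - 1))) := by ring
  -- decay bound for v ^ q
  have hvq : ∀ y : EuclideanSpace ℝ (Fin n), v y ^ q = (1 + ‖y‖ ^ t) ^ (-(n:ℝ)) := by
    intro y
    rw [hv y, ← Real.rpow_mul (hW y).le, hsq]
  have hB3 : ∀ y : EuclideanSpace ℝ (Fin n),
      v y ^ q ≤ 2 ^ (t * (n:ℝ)) * (1 + ‖y‖) ^ (-(t * (n:ℝ))) := by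
    intro y
    rw [hvq y]
    have hA : (0:ℝ) < 2 ^ (-t) * (1 + ‖y‖) ^ t := by positivity
    have hle : 2 ^ (-t) * (1 + ‖y‖) ^ t ≤ 1 + ‖y‖ ^ t :=
      one_add_rpow_lb (norm_nonneg y) ht0.le
    have h1 : (1 + ‖y‖ ^ t) ^ (-(n:ℝ)) ≤ (2 ^ (-t) * (1 + ‖y‖) ^ t) ^ (-(n:ℝ)) :=
      Real.rpow_le_rpow_of_nonpos hA hle (by simp : -(n:ℝ) ≤ 0)
    have h2 : (2 ^ (-t) * (1 + ‖y‖) ^ t) ^ (-(n:ℝ))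
        = (2 ^ (-t) : ℝ) ^ (-(n:ℝ)) * ((1 + ‖y‖) ^ t) ^ (-(n:ℝ)) :=
      Real.mul_rpow (by positivity) (Real.rpow_nonneg (by positivity) _)
    have h3 : ((2:ℝ) ^ (-t)) ^ (-(n:ℝ)) = 2 ^ (t * (n:ℝ)) := by
      rw [← Real.rpow_mul (by norm_num : (0:ℝ) ≤ 2)]
      congr 1; ring
    have h4 : ((1 + ‖y‖) ^ t) ^ (-(n:ℝ)) = (1 + ‖y‖) ^ (-(t * (n:ℝ))) := by
      rw [← Real.rpow_mul (by positivity : (0:ℝ) ≤ 1 + ‖y‖)]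
      ring_nf
    rw [h2, h3, h4] at h1
    exact h1
  -- φ facts
  have hφc : Continuous φ := hφsm.continuous
  have hφcs : HasCompactSupport φ :=
    IsCompact.of_isClosed_subset (isCompact_closedBall 0 1) (isClosed_tsupport φ)
      (hφsupp.trans ball_subset_closedBall)
  have hφd : Differentiable ℝ φ := hφsm.differentiable (by simp)
  have hDφc : Continuous (fderiv ℝ φ) := hφsm.continuous_fderiv (by simp)
  have hDφcs : HasCompactSupport (fderiv ℝ φ) := hφcs.fderiv ℝ
  obtain ⟨M, hM⟩ : ∃ M : ℝ, ∀ z, |φ z| ≤ M := by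
    obtain ⟨M, hM⟩ := (hφc.abs).bounded_above_of_compact_support hφcs.abs
    exact ⟨M, fun z => by simpa using hM z⟩
  obtain ⟨M', hM'⟩ : ∃ M' : ℝ, ∀ z, ‖fderiv ℝ φ z‖ ≤ M' := by
    obtain ⟨M, hM⟩ := (hDφc.norm).bounded_above_of_compact_support hDφcs.norm
    exact ⟨M, fun z => by simpa using hM z⟩
  have hM0 : 0 ≤ M := le_trans (abs_nonneg _) (hM 0)
  have hM'0 : 0 ≤ M' := le_trans (norm_nonneg _) (hM' 0)
  -- a.e. nonzero
  have hFin : Nonempty (Fin n) := ⟨⟨0, by omega⟩⟩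
  have h0ae : ∀ᵐ y : EuclideanSpace ℝ (Fin n), y ≠ 0 := by
    rw [ae_iff]
    have he : {a : EuclideanSpace ℝ (Fin n) | ¬ a ≠ 0} = {0} := by ext a; simp
    rw [he]
    exact measure_singleton 0
  have hfrk : (Module.finrank ℝ (EuclideanSpace ℝ (Fin n)) : ℝ) = (n:ℝ) := by
    simp [finrank_euclideanSpace]
  -- integrability of ‖fderiv v‖ ^ p
  have hmeasDv : AEStronglyMeasurable
      (fun y : EuclideanSpace ℝ (Fin n) => ‖fderiv ℝ v y‖ ^ p) volume := by
    have hcont : Continuous (fun r : ℝ => r ^ p) :=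
      Real.continuous_rpow_const hp0.le
    exact (hcont.measurable.comp (measurable_fderiv ℝ v).norm).aestronglyMeasurable
  have hint1 : Integrable (fun y : EuclideanSpace ℝ (Fin n) => ‖fderiv ℝ v y‖ ^ p) := by
    have hRint : Integrable
        (fun y : EuclideanSpace ℝ (Fin n) => (1 + ‖y‖) ^ (-(t * ((n:ℝ) - 1)))) := by
      apply integrable_one_add_norm
      rw [hfrk]; exact hnR1
    refine Integrable.mono' (hRint.const_mul ((s * t) ^ p * 2 ^ (t * ((n:ℝ) - 1)))) hmeasDv ?_
    filter_upwards [h0ae] with y hy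
    rw [Real.norm_eq_abs, abs_of_nonneg (Real.rpow_nonneg (norm_nonneg _) p)]
    exact hB2 y hy
  -- integrability of v ^ q
  have hintvq : Integrable (fun y : EuclideanSpace ℝ (Fin n) => v y ^ q) := by
    have hRint : Integrable
        (fun y : EuclideanSpace ℝ (Fin n) => (1 + ‖y‖) ^ (-(t * (n:ℝ)))) := by
      apply integrable_one_add_norm
      rw [hfrk]; exact hnR2
    refine Integrable.mono' (hRint.const_mul (2 ^ (t * (n:ℝ))))
      ((hvcont.rpow_const (fun y => Or.inl (hv0 y).ne')).aestronglyMeasurable) ?_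
    filter_upwards with y
    rw [Real.norm_eq_abs, abs_of_nonneg (Real.rpow_nonneg (hv0 y).le q)]
    exact hB3 y
  -- constants
  set K := ((1:ℝ) + 2 ^ t) ^ s with hKdef
  have hK0 : 0 < K := Real.rpow_pos_of_pos (by positivity) s
  set c₁ := (p * (s * t + 2 * M') ^ (p - 1) * (s * t) + (s * t) ^ p) * K with hc1def
  set c₂ := (q * (1 + 2 * M) ^ (q - 1) + 1) * K with hc2def
  have hc₁0 : 0 ≤ c₁ := by
    rw [hc1def]
    have e1 : (0:ℝ) ≤ (s * t + 2 * M') ^ (p - 1) := Real.rpow_nonneg (by positivity) _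
    have e2 : (0:ℝ) ≤ (s * t) ^ p := Real.rpow_nonneg (by positivity) _
    nlinarith [hK0.le, hp0.le, mul_nonneg (mul_nonneg hp0.le e1) (by positivity : (0:ℝ) ≤ s * t)]
  have hc₂0 : 0 ≤ c₂ := by
    rw [hc2def]
    have e1 : (0:ℝ) ≤ (1 + 2 * M) ^ (q - 1) := Real.rpow_nonneg (by positivity) _
    nlinarith [hK0.le, mul_nonneg (by linarith : (0:ℝ) ≤ q) e1]
  set Vol := (volume (closedBall (0 : EuclideanSpace ℝ (Fin n)) 1)).toReal with hVdef
  have hVol0 : 0 ≤ Vol := ENNReal.toReal_nonneg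
  refine ⟨(c₁ + c₂) * Vol + 1, by nlinarith [mul_nonneg (add_nonneg hc₁0 hc₂0) hVol0], fun i => ?_, ?_⟩
  · -- the main estimate for each i
    set z := x i with hzdef
    set ψ : EuclideanSpace ℝ (Fin n) → ℝ := fun y => φ (z + y) with hψdef
    set Dψ : EuclideanSpace ℝ (Fin n) → (EuclideanSpace ℝ (Fin n)) →L[ℝ] ℝ :=
      fun y => fderiv ℝ φ (z + y) with hDψdef
    have hui : u i = fun y => v y + ψ y := by
      funext y
      simp only [hψdef, hzdef, hu i y]
    have hψd : ∀ y, HasFDerivAt ψ (Dψ y) y := by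
      intro y
      have hg : HasFDerivAt (fun y : EuclideanSpace ℝ (Fin n) => z + y)
          (ContinuousLinearMap.id ℝ (EuclideanSpace ℝ (Fin n))) y := by
        simpa using (hasFDerivAt_id y).const_add z
      have h := ((hφd (z + y)).hasFDerivAt).comp y hg
      simp at h; exact h
    have hDui : ∀ y : EuclideanSpace ℝ (Fin n), y ≠ 0 →
        fderiv ℝ (u i) y = fderiv ℝ v y + Dψ y := by
      intro y hy
      rw [hui]
      exact (((hvdiff y hy).hasFDerivAt).add (hψd y)).fderiv
    set S : Set (EuclideanSpace ℝ (Fin n)) := closedBall (-z) 1 with hSdef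
    have hmemS : ∀ y, y ∉ S → ¬ (z + y) ∈ ball (0 : EuclideanSpace ℝ (Fin n)) 1 := by
      intro y hy hmem
      apply hy
      rw [hSdef, mem_closedBall]
      have e : dist y (-z) = ‖z + y‖ := by
        rw [dist_eq_norm, sub_neg_eq_add, add_comm]
      rw [e]
      exact le_of_lt (mem_ball_zero_iff.1 hmem)
    have hψ0 : ∀ y, y ∉ S → ψ y = 0 := by
      intro y hy
      by_contra h0
      exact hmemS y hy (hφsupp (subset_tsupport φ (Function.mem_support.2 h0)))
    have hDψ0 : ∀ y, y ∉ S → Dψ y = 0 := by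
      intro y hy
      by_contra h0
      exact hmemS y hy (hφsupp (support_fderiv_subset ℝ (Function.mem_support.2 h0)))
    have hcompS : ∀ y ∈ S, v y ≤ K * v z := by
      intro y hyS
      have h2 : ‖z‖ ≤ ‖y‖ + 1 := by
        have h1 : ‖z + y‖ ≤ 1 := by
          rw [hSdef, mem_closedBall, dist_eq_norm, sub_neg_eq_add, add_comm] at hyS
          exact hyS
        have h3 := norm_sub_le (z + y) y
        rw [add_sub_cancel_right] at h3
        linarith
      rw [hv y, hv z, hKdef]
      exact comp_bound ht0.le hs.le (norm_nonneg z) (norm_nonneg y) h2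
    have hSmeas : MeasurableSet S := measurableSet_closedBall
    have hSfin : volume S < ⊤ := measure_closedBall_lt_top
    have hvolS : (volume S).toReal = Vol := by
      rw [hSdef, Measure.addHaar_closedBall_center, hVdef]
    -- integrability
    have hcontψ : Continuous ψ := hφc.comp (continuous_const.add continuous_id)
    have hcontDψn : Continuous fun y => ‖Dψ y‖ :=
      (hDφc.comp (continuous_const.add continuous_id)).norm
    have hintψp : Integrable (fun y => ‖Dψ y‖ ^ p) := by
      apply Continuous.integrable_of_hasCompactSupport
      · exact hcontDψn.rpow_const (fun y => Or.inr hp0.le)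
      · have hg := hDφcs.comp_left
          (g := fun L : (EuclideanSpace ℝ (Fin n)) →L[ℝ] ℝ => ‖L‖ ^ p)
          (by simp [Real.zero_rpow hp0.ne'])
        have h2 := hg.comp_homeomorph (Homeomorph.addLeft z)
        exact h2
    have hintψq : Integrable (fun y => |ψ y| ^ q) := by
      apply Continuous.integrable_of_hasCompactSupport
      · exact hcontψ.abs.rpow_const (fun y => Or.inr (by linarith))
      · have hg := hφcs.comp_left (g := fun r : ℝ => |r| ^ q)
          (by simp [Real.zero_rpow (by linarith : (0:ℝ) < q).ne'])
        have h2 := hg.comp_homeomorph (Homeomorph.addLeft z)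
        exact h2
    have hintu1 : Integrable (fun y => ‖fderiv ℝ (u i) y‖ ^ p) := by
      have hmeas : AEStronglyMeasurable
          (fun y : EuclideanSpace ℝ (Fin n) => ‖fderiv ℝ (u i) y‖ ^ p) volume :=
        ((Real.continuous_rpow_const hp0.le).measurable.comp
          (measurable_fderiv ℝ (u i)).norm).aestronglyMeasurable
      refine Integrable.mono' ((hint1.add hintψp).const_mul (2 ^ p)) hmeas ?_
      filter_upwards [h0ae] with y hy
      rw [Real.norm_eq_abs, abs_of_nonneg (Real.rpow_nonneg (norm_nonneg _) p)]
      have hle : ‖fderiv ℝ (u i) y‖ ≤ ‖fderiv ℝ v y‖ + ‖Dψ y‖ := by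
        rw [hDui y hy]; exact norm_add_le _ _
      calc ‖fderiv ℝ (u i) y‖ ^ p ≤ (‖fderiv ℝ v y‖ + ‖Dψ y‖) ^ p :=
            Real.rpow_le_rpow (norm_nonneg _) hle hp0.le
        _ ≤ 2 ^ p * (‖fderiv ℝ v y‖ ^ p + ‖Dψ y‖ ^ p) :=
            add_rpow_le (norm_nonneg _) (norm_nonneg _) hp0.le
    have hcontu : Continuous (u i) := by rw [hui]; exact hvcont.add hcontψ
    have hintuq : Integrable (fun y => |u i y| ^ q) := by
      have hmeas : AEStronglyMeasurable
          (fun y : EuclideanSpace ℝ (Fin n) => |u i y| ^ q) volume :=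
        (hcontu.abs.rpow_const
          (fun y => Or.inr (by linarith : (0:ℝ) ≤ q))).aestronglyMeasurable
      refine Integrable.mono' ((hintvq.add hintψq).const_mul (2 ^ q)) hmeas ?_
      filter_upwards with y
      rw [Real.norm_eq_abs, abs_of_nonneg (Real.rpow_nonneg (abs_nonneg _) q)]
      have hle : |u i y| ≤ v y + |ψ y| := by
        rw [congrFun hui y]
        refine (abs_add_le _ _).trans ?_
        rw [abs_of_pos (hv0 y)]
      calc |u i y| ^ q ≤ (v y + |ψ y|) ^ q :=
            Real.rpow_le_rpow (abs_nonneg _) hle (by linarith)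
        _ ≤ 2 ^ q * (v y ^ q + |ψ y| ^ q) :=
            add_rpow_le (hv0 y).le (abs_nonneg _) (by linarith)
    have htrans1 : (∫ y, ‖Dψ y‖ ^ p) = ∫ y, ‖fderiv ℝ φ y‖ ^ p := by
      simp only [hDψdef]
      exact integral_add_left_eq_self (μ := volume) (fun w => ‖fderiv ℝ φ w‖ ^ p) z
    have htrans2 : (∫ y, |ψ y| ^ q) = ∫ y, |φ y| ^ q := by
      simp only [hψdef]
      exact integral_add_left_eq_self (μ := volume) (fun w => |φ w| ^ q) z
    set h1f : EuclideanSpace ℝ (Fin n) → ℝ :=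
      fun y => ‖fderiv ℝ (u i) y‖ ^ p - ‖fderiv ℝ v y‖ ^ p - ‖Dψ y‖ ^ p with h1fdef
    set h2f : EuclideanSpace ℝ (Fin n) → ℝ :=
      fun y => |u i y| ^ q - v y ^ q - |ψ y| ^ q with h2fdef
    have hinth1 : Integrable h1f := (hintu1.sub hint1).sub hintψp
    have hinth2 : Integrable h2f := (hintuq.sub hintvq).sub hintψq
    have hint12 : Integrable (fun y : EuclideanSpace ℝ (Fin n) =>
        ‖fderiv ℝ (u i) y‖ ^ p - ‖fderiv ℝ v y‖ ^ p) := hintu1.sub hint1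
    have heq1 : (∫ y, h1f y) = (∫ y, ‖fderiv ℝ (u i) y‖ ^ p)
        - (∫ y, ‖fderiv ℝ v y‖ ^ p) - ∫ y, ‖Dψ y‖ ^ p := by
      simp only [h1fdef]
      rw [integral_sub hint12 hintψp, integral_sub hintu1 hint1]
    have hint22 : Integrable (fun y : EuclideanSpace ℝ (Fin n) =>
        |u i y| ^ q - v y ^ q) := hintuq.sub hintvq
    have heq2 : (∫ y, h2f y) = (∫ y, |u i y| ^ q)
        - (∫ y, v y ^ q) - ∫ y, |ψ y| ^ q := by
      simp only [h2fdef]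
      rw [integral_sub hint22 hintψq, integral_sub hintuq hintvq]
    -- pointwise bounds
    have hb1 : ∀ᵐ y : EuclideanSpace ℝ (Fin n), |h1f y| ≤ S.indicator (fun _ => c₁ * v z) y := by
      filter_upwards [h0ae] with y hy
      by_cases hyS : y ∈ S
      · rw [Set.indicator_of_mem hyS]
        have hva : ‖fderiv ℝ v y‖ ≤ s * t * v y := hB1 y hy
        have hva1 : ‖fderiv ℝ v y‖ ≤ s * t := by
          nlinarith [mul_le_mul_of_nonneg_left (hv1 y) (by positivity : (0:ℝ) ≤ s * t)]
        have hAle : ‖fderiv ℝ (u i) y‖ ≤ ‖fderiv ℝ v y‖ + ‖Dψ y‖ := by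
          rw [hDui y hy]; exact norm_add_le _ _
        have hAb : |‖fderiv ℝ (u i) y‖ - ‖Dψ y‖| ≤ ‖fderiv ℝ v y‖ := by
          rw [hDui y hy]
          simpa using abs_norm_sub_norm_le (fderiv ℝ v y + Dψ y) (Dψ y)
        have key1 : |‖fderiv ℝ (u i) y‖ ^ p - ‖Dψ y‖ ^ p|
            ≤ p * (‖fderiv ℝ (u i) y‖ + ‖Dψ y‖) ^ (p - 1)
              * |‖fderiv ℝ (u i) y‖ - ‖Dψ y‖| :=
          abs_rpow_sub_rpow (norm_nonneg _) (norm_nonneg _) hp1.le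
        have hsum : ‖fderiv ℝ (u i) y‖ + ‖Dψ y‖ ≤ s * t + 2 * M' := by
          have h9 := hM' (z + y)
          have h9' : ‖Dψ y‖ ≤ M' := h9
          linarith
        have hmono : (‖fderiv ℝ (u i) y‖ + ‖Dψ y‖) ^ (p - 1) ≤ (s * t + 2 * M') ^ (p - 1) :=
          Real.rpow_le_rpow (by positivity) hsum (by linarith)
        have hap : ‖fderiv ℝ v y‖ ^ p ≤ (s * t) ^ p * v y := by
          calc ‖fderiv ℝ v y‖ ^ p ≤ (s * t * v y) ^ p :=
                Real.rpow_le_rpow (norm_nonneg _) hva hp0.le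
            _ = (s * t) ^ p * v y ^ p := Real.mul_rpow (by positivity) (hv0 y).le
            _ ≤ (s * t) ^ p * v y := by
                have hvp : v y ^ p ≤ v y := by
                  have h5 : v y ^ p ≤ v y ^ (1:ℝ) :=
                    Real.rpow_le_rpow_of_exponent_ge (hv0 y) (hv1 y) (by linarith)
                  rwa [Real.rpow_one] at h5
                have h6 : (0:ℝ) ≤ (s * t) ^ p := Real.rpow_nonneg (by positivity) p
                nlinarith
        have hsplit : |h1f y| ≤ |‖fderiv ℝ (u i) y‖ ^ p - ‖Dψ y‖ ^ p| + ‖fderiv ℝ v y‖ ^ p := by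
          simp only [h1fdef]
          have e : ‖fderiv ℝ (u i) y‖ ^ p - ‖fderiv ℝ v y‖ ^ p - ‖Dψ y‖ ^ p
              = (‖fderiv ℝ (u i) y‖ ^ p - ‖Dψ y‖ ^ p) - ‖fderiv ℝ v y‖ ^ p := by ring
          rw [e]
          refine (abs_sub _ _).trans ?_
          rw [abs_of_nonneg (Real.rpow_nonneg (norm_nonneg _) p)]
        have hvyK : v y ≤ K * v z := hcompS y hyS
        have t1 : |‖fderiv ℝ (u i) y‖ ^ p - ‖Dψ y‖ ^ p|
            ≤ p * (s * t + 2 * M') ^ (p - 1) * (s * t * v y) := by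
          refine key1.trans ?_
          have h6 : |‖fderiv ℝ (u i) y‖ - ‖Dψ y‖| ≤ s * t * v y := hAb.trans hva
          have h7 := mul_le_mul hmono h6 (abs_nonneg _)
            (Real.rpow_nonneg (by positivity : (0:ℝ) ≤ s * t + 2 * M') _)
          have h8 := mul_le_mul_of_nonneg_left h7 hp0.le
          nlinarith [h8]
        calc |h1f y| ≤ |‖fderiv ℝ (u i) y‖ ^ p - ‖Dψ y‖ ^ p| + ‖fderiv ℝ v y‖ ^ p := hsplit
          _ ≤ p * (s * t + 2 * M') ^ (p - 1) * (s * t * v y) + (s * t) ^ p * v y := by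
              linarith [t1, hap]
          _ = (p * (s * t + 2 * M') ^ (p - 1) * (s * t) + (s * t) ^ p) * v y := by ring
          _ ≤ (p * (s * t + 2 * M') ^ (p - 1) * (s * t) + (s * t) ^ p) * (K * v z) := by
              refine mul_le_mul_of_nonneg_left hvyK ?_
              have e1 : (0:ℝ) ≤ (s * t + 2 * M') ^ (p - 1) := Real.rpow_nonneg (by positivity) _
              have e2 : (0:ℝ) ≤ (s * t) ^ p := Real.rpow_nonneg (by positivity) _
              nlinarith [mul_nonneg (mul_nonneg hp0.le e1) (by positivity : (0:ℝ) ≤ s * t)]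
          _ = c₁ * v z := by rw [hc1def]; ring
      · rw [Set.indicator_of_notMem hyS]
        have hD0 := hDψ0 y hyS
        have he : fderiv ℝ (u i) y = fderiv ℝ v y := by rw [hDui y hy, hD0, add_zero]
        simp only [h1fdef, he, hD0]
        rw [norm_zero, Real.zero_rpow hp0.ne']
        simp
    have hb2 : ∀ᵐ y : EuclideanSpace ℝ (Fin n), |h2f y| ≤ S.indicator (fun _ => c₂ * v z) y := by
      filter_upwards with y
      by_cases hyS : y ∈ S
      · rw [Set.indicator_of_mem hyS]
        have huy : u i y = v y + ψ y := congrFun hui y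
        have hadd : |u i y| ≤ v y + |ψ y| := by
          rw [huy]
          refine (abs_add_le _ _).trans ?_
          rw [abs_of_pos (hv0 y)]
        have habd : abs (|u i y| - |ψ y|) ≤ v y := by
          rw [huy]
          have h4 := abs_abs_sub_abs_le_abs_sub (v y + ψ y) (ψ y)
          simpa [abs_of_pos (hv0 y)] using h4
        have key2 : abs (|u i y| ^ q - |ψ y| ^ q)
            ≤ q * (|u i y| + |ψ y|) ^ (q - 1) * abs (|u i y| - |ψ y|) :=
          abs_rpow_sub_rpow (abs_nonneg _) (abs_nonneg _) hq1.le
        have hψM : |ψ y| ≤ M := hM (z + y)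
        have hsum : |u i y| + |ψ y| ≤ 1 + 2 * M := by
          have h2 := hv1 y
          linarith [hadd]
        have hmono : (|u i y| + |ψ y|) ^ (q - 1) ≤ (1 + 2 * M) ^ (q - 1) :=
          Real.rpow_le_rpow (by positivity) hsum (by linarith)
        have hvq' : v y ^ q ≤ v y := by
          have h5 : v y ^ q ≤ v y ^ (1:ℝ) :=
            Real.rpow_le_rpow_of_exponent_ge (hv0 y) (hv1 y) (by linarith)
          rwa [Real.rpow_one] at h5
        have hsplit : |h2f y| ≤ abs (|u i y| ^ q - |ψ y| ^ q) + v y ^ q := by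
          simp only [h2fdef]
          have e : |u i y| ^ q - v y ^ q - |ψ y| ^ q
              = (|u i y| ^ q - |ψ y| ^ q) - v y ^ q := by ring
          rw [e]
          refine (abs_sub _ _).trans ?_
          rw [abs_of_nonneg (Real.rpow_nonneg (hv0 y).le q)]
        have hvyK : v y ≤ K * v z := hcompS y hyS
        have t2 : abs (|u i y| ^ q - |ψ y| ^ q) ≤ q * (1 + 2 * M) ^ (q - 1) * v y := by
          refine key2.trans ?_
          have h7 := mul_le_mul hmono habd (abs_nonneg _)
            (Real.rpow_nonneg (by positivity : (0:ℝ) ≤ 1 + 2 * M) _)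
          have h8 := mul_le_mul_of_nonneg_left h7 (by linarith : (0:ℝ) ≤ q)
          nlinarith [h8]
        calc |h2f y| ≤ abs (|u i y| ^ q - |ψ y| ^ q) + v y ^ q := hsplit
          _ ≤ q * (1 + 2 * M) ^ (q - 1) * v y + v y := by linarith [t2, hvq']
          _ = (q * (1 + 2 * M) ^ (q - 1) + 1) * v y := by ring
          _ ≤ (q * (1 + 2 * M) ^ (q - 1) + 1) * (K * v z) := by
              refine mul_le_mul_of_nonneg_left hvyK ?_
              have e1 : (0:ℝ) ≤ (1 + 2 * M) ^ (q - 1) := Real.rpow_nonneg (by positivity) _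
              nlinarith [mul_nonneg (by linarith : (0:ℝ) ≤ q) e1]
          _ = c₂ * v z := by rw [hc2def]; ring
      · rw [Set.indicator_of_notMem hyS]
        have hψy := hψ0 y hyS
        have huy : u i y = v y := by rw [congrFun hui y, hψy, add_zero]
        simp only [h2fdef, huy, hψy]
        rw [abs_of_pos (hv0 y), abs_zero, Real.zero_rpow (by linarith : (0:ℝ) < q).ne']
        simp
    -- integral bounds
    have hindint1 : Integrable (S.indicator fun _ : EuclideanSpace ℝ (Fin n) => c₁ * v z) := by
      rw [integrable_indicator_iff hSmeas]
      exact integrableOn_const hSfin.ne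
    have hindint2 : Integrable (S.indicator fun _ : EuclideanSpace ℝ (Fin n) => c₂ * v z) := by
      rw [integrable_indicator_iff hSmeas]
      exact integrableOn_const hSfin.ne
    have hI1 : |∫ y, h1f y| ≤ c₁ * v z * Vol := by
      have e0 : |∫ y, h1f y| ≤ ∫ y, |h1f y| := by
        simpa [Real.norm_eq_abs] using norm_integral_le_integral_norm h1f
      have e1 : (∫ y, |h1f y|) ≤ ∫ y, S.indicator (fun _ => c₁ * v z) y :=
        integral_mono_ae hinth1.abs hindint1 hb1
      have e2 : (∫ y, S.indicator (fun _ => c₁ * v z) y) = c₁ * v z * Vol := by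
        rw [integral_indicator_const _ hSmeas, measureReal_def, hvolS, smul_eq_mul]
        ring
      linarith
    have hI2 : |∫ y, h2f y| ≤ c₂ * v z * Vol := by
      have e0 : |∫ y, h2f y| ≤ ∫ y, |h2f y| := by
        simpa [Real.norm_eq_abs] using norm_integral_le_integral_norm h2f
      have e1 : (∫ y, |h2f y|) ≤ ∫ y, S.indicator (fun _ => c₂ * v z) y :=
        integral_mono_ae hinth2.abs hindint2 hb2
      have e2 : (∫ y, S.indicator (fun _ => c₂ * v z) y) = c₂ * v z * Vol := by
        rw [integral_indicator_const _ hSmeas, measureReal_def, hvolS, smul_eq_mul]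
        ring
      linarith
    have hfin1 : |(∫ y, ‖fderiv ℝ (u i) y‖ ^ p) - (∫ y, ‖fderiv ℝ v y‖ ^ p)
        - ∫ y, ‖fderiv ℝ φ y‖ ^ p| ≤ c₁ * v z * Vol := by
      rw [← htrans1, ← heq1]
      exact hI1
    have hfin2 : |(∫ y, |u i y| ^ q) - (∫ y, v y ^ q) - ∫ y, |φ y| ^ q| ≤ c₂ * v z * Vol := by
      rw [← htrans2, ← heq2]
      exact hI2
    have hvz0 : 0 < v z := hv0 z
    have hnn : (0:ℝ) ≤ ‖fderiv ℝ v z‖ := norm_nonneg _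
    nlinarith [hfin1, hfin2,
      mul_nonneg (mul_nonneg (add_nonneg hc₁0 hc₂0) hVol0) hnn, hvz0.le]
  · -- the limit
    have hvz : Tendsto (fun i => v (x i)) atTop (nhds 0) := by
      have l1 : Tendsto (fun i => 1 + ‖x i‖ ^ t) atTop atTop :=
        tendsto_atTop_add_const_left _ 1 ((tendsto_rpow_atTop ht0).comp hx)
      have l2 : Tendsto (fun A : ℝ => A ^ (-s)) atTop (nhds 0) :=
        tendsto_rpow_neg_atTop hs
      exact (l2.comp l1).congr (fun i => (hv (x i)).symm)
    have hDvz : Tendsto (fun i => ‖fderiv ℝ v (x i)‖) atTop (nhds 0) := by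
      refine squeeze_zero' (Eventually.of_forall (fun i => norm_nonneg _)) ?_
        (by simpa using hvz.const_mul (s * t))
      filter_upwards [hx.eventually_ge_atTop 1] with i hi
      have hxne : x i ≠ 0 := by
        intro h0
        rw [h0] at hi
        simp at hi
        linarith
      exact hB1 _ hxne
    simpa using hvz.add hDvz
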